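/- Suppose ρ_h, ω_h, u_h, γ_h : [0,T] → V_h^k (with u_h, ρ_h, ω_h differentiable in s) satisfy, for every cell I_j and all test functions φ, ϕ, ψ, η ∈ V_h^k: ((ρ_h)_s, φ)_{I_j} + ⟨γ̂_h, φ⟩_{I_j} − (γ_h, φ_y)_{I_j} = 0; ((ω_h)_s, ϕ)_{I_j} = (ρ_h u_h, ϕ)_{I_j}; (ω_h, ψ)_{I_j} = ⟨û_h, ψ⟩_{I_j} − (u_h, ψ_y)_{I_j}; and (γ_h, η)_{I_j} = (½ u_h², η)_{I_j}, with numerical fluxes γ̂_h = {γ_h} − β⟦γ_h⟧ and û_h = {u_h} + μ⟦u_h⟧ where β ≥ 0 and μ ≥ 0, and with periodic boundary conditions. Then the scheme is dissipative on H_0: d/ds ∫_{y_L}^{y_R} ρ_h u_h² dy ≤ 0 for all s. -/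

import Mathlib

open MeasureTheory Polynomial
open scoped Classical

noncomputable section

/- Mesh with `N + 1` cells: cell `j` is `I_j = [grid j.castSucc, grid j.succ]`.
A DG function in `V_h^k` is represented by the family of its polynomial restrictions
to the cells; interfaces are treated periodically (indices modulo the number of cells). -/

/-- Left endpoint of cell `j`. -/
def lep {N : ℕ} (grid : Fin (N + 2) → ℝ) (j : Fin (N + 1)) : ℝ := grid j.castSucc

/-- Right endpoint of cell `j`. -/
def rep {N : ℕ} (grid : Fin (N + 2) → ℝ) (j : Fin (N + 1)) : ℝ := grid j.succ

/-- `∫_{I_j} f dy`. -/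
def cellInt {N : ℕ} (grid : Fin (N + 2) → ℝ) (j : Fin (N + 1)) (f : ℝ → ℝ) : ℝ :=
  ∫ y in lep grid j..rep grid j, f y

/-- Trace `w⁻` at the interface `y_{j+1/2}`, from the left cell `I_j`. -/
def trM {N : ℕ} (grid : Fin (N + 2) → ℝ) (f : Fin (N + 1) → Polynomial ℝ)
    (j : Fin (N + 1)) : ℝ :=
  (f j).eval (rep grid j)

/-- Trace `w⁺` at the interface `y_{j+1/2}`, from the right cell `I_{j+1}`
(cyclically, realizing the periodic boundary conditions). -/
def trP {N : ℕ} (grid : Fin (N + 2) → ℝ) (f : Fin (N + 1) → Polynomial ℝ)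
    (j : Fin (N + 1)) : ℝ :=
  (f (j + 1)).eval (lep grid (j + 1))

/-- Average `{w} = (w⁺ + w⁻)/2` at the interface `y_{j+1/2}`. -/
def avg {N : ℕ} (grid : Fin (N + 2) → ℝ) (f : Fin (N + 1) → Polynomial ℝ)
    (j : Fin (N + 1)) : ℝ :=
  (trP grid f j + trM grid f j) / 2

/-- Jump `⟦w⟧ = w⁺ - w⁻` at the interface `y_{j+1/2}`. -/
def jmp {N : ℕ} (grid : Fin (N + 2) → ℝ) (f : Fin (N + 1) → Polynomial ℝ)
    (j : Fin (N + 1)) : ℝ :=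
  trP grid f j - trM grid f j

/-- Boundary bracket `⟨ĥ, φ⟩_{I_j} = ĥ_{j+1/2} φ⁻_{j+1/2} - ĥ_{j-1/2} φ⁺_{j-1/2}`, where the
interface values `ĥ` are indexed by the right interface of each cell (periodically). -/
def brk {N : ℕ} (grid : Fin (N + 2) → ℝ) (hat : Fin (N + 1) → ℝ) (φ : Polynomial ℝ)
    (j : Fin (N + 1)) : ℝ :=
  hat j * φ.eval (rep grid j) - hat (j - 1) * φ.eval (lep grid j)

/-! Differentiating `H₀` cell by cell gives `2 ∫ (u²/2) ρ' + 2 ∫ ρ u u'`. Testing the fourth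
equation with `ρ'` and the second with `u'` turns this into `2 ∫ γ ρ' + 2 ∫ ω' u'`. Testing the
first equation with `γ` and the time-differentiated third one with `u'`, the volume terms become
exact derivatives `(γ²/2)_y`, `(u'²/2)_y`; summed over the periodic mesh, everything telescopes
into interface terms, and the choice of fluxes leaves `-2β ∑ ⟦γ⟧² - 2μ ∑ ⟦u'⟧² ≤ 0`.

Time derivatives commute with cell integrals because a polynomial of degree `≤ m` is a fixed
linear combination of its values at the nodes `0, …, m` (Lagrange interpolation). -/

open Finset

section PolynomialFamilies

def natLagrangeBasis (m i : ℕ) : ℝ[X] :=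
  Lagrange.basis (range (m + 1)) (Nat.cast : ℕ → ℝ) i

lemma natDegree_natLagrangeBasis_le {m i : ℕ} (hi : i ∈ range (m + 1)) :
    (natLagrangeBasis m i).natDegree ≤ m := by
  rw [natLagrangeBasis, Lagrange.natDegree_basis Nat.cast_injective.injOn hi, card_range]
  omega

lemma eval_eq_sum_natLagrangeBasis {m : ℕ} {P : ℝ[X]} (hP : P.natDegree ≤ m) (y : ℝ) :
    P.eval y = ∑ i ∈ range (m + 1), P.eval (i : ℝ) * (natLagrangeBasis m i).eval y := by
  have hlt : P.degree < #(range (m + 1)) := by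
    rw [card_range]
    exact (degree_le_natDegree.trans (WithBot.coe_le_coe.2 hP)).trans_lt
      (WithBot.coe_lt_coe.2 m.lt_succ_self)
  conv_lhs => rw [Lagrange.eq_interpolate Nat.cast_injective.injOn hlt]
  simp [Lagrange.interpolate_apply, natLagrangeBasis, eval_finsetSum]

lemma intervalIntegral_eval_eq_sum_natLagrangeBasis {m : ℕ} {P : ℝ[X]} (hP : P.natDegree ≤ m)
    (a b : ℝ) :
    ∫ y in a..b, P.eval y
      = ∑ i ∈ range (m + 1), P.eval (i : ℝ) * ∫ y in a..b, (natLagrangeBasis m i).eval y := by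
  rw [intervalIntegral.integral_congr fun y _ => eval_eq_sum_natLagrangeBasis hP y,
    intervalIntegral.integral_finsetSum fun i _ =>
    ((natLagrangeBasis m i).continuous.const_mul _).intervalIntegrable a b]
  simp only [intervalIntegral.integral_const_mul]

variable {m : ℕ} {P : ℝ → ℝ[X]} {Q : ℝ[X]} {s : ℝ}

lemma natDegree_le_of_hasDerivAt_eval (hP : ∀ τ, (P τ).natDegree ≤ m)
    (hQ : ∀ y, HasDerivAt (fun τ => (P τ).eval y) (Q.eval y) s) :
    Q.natDegree ≤ m := by
  have hnodal : ∀ y,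
      Q.eval y = ∑ i ∈ range (m + 1), Q.eval (i : ℝ) * (natLagrangeBasis m i).eval y :=
    fun y => (hQ y).unique <| by
      rw [funext fun τ => eval_eq_sum_natLagrangeBasis (hP τ) y]
      exact HasDerivAt.fun_sum fun i _ => (hQ i).mul_const _
  have hQ_eq : Q = ∑ i ∈ range (m + 1), C (Q.eval (i : ℝ)) * natLagrangeBasis m i :=
    Polynomial.funext fun y => by simp [eval_finsetSum, hnodal y]
  rw [hQ_eq]
  exact natDegree_sum_le_of_forall_le _ _ fun i hi =>
    (natDegree_C_mul_le _ _).trans (natDegree_natLagrangeBasis_le hi)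

lemma hasDerivAt_intervalIntegral_eval (hP : ∀ τ, (P τ).natDegree ≤ m)
    (hQ : ∀ y, HasDerivAt (fun τ => (P τ).eval y) (Q.eval y) s) (a b : ℝ) :
    HasDerivAt (fun τ => ∫ y in a..b, (P τ).eval y) (∫ y in a..b, Q.eval y) s := by
  rw [funext fun τ => intervalIntegral_eval_eq_sum_natLagrangeBasis (hP τ) a b,
    intervalIntegral_eval_eq_sum_natLagrangeBasis (natDegree_le_of_hasDerivAt_eval hP hQ)]
  exact HasDerivAt.fun_sum fun i _ => (hQ i).mul_const _

lemma hasDerivAt_intervalIntegral_eval_mul (hP : ∀ τ, (P τ).natDegree ≤ m)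
    (hQ : ∀ y, HasDerivAt (fun τ => (P τ).eval y) (Q.eval y) s) (ψ : ℝ[X]) (a b : ℝ) :
    HasDerivAt (fun τ => ∫ y in a..b, (P τ).eval y * ψ.eval y)
      (∫ y in a..b, Q.eval y * ψ.eval y) s := by
  simp only [← eval_mul]
  exact hasDerivAt_intervalIntegral_eval
    (fun τ => natDegree_mul_le.trans (Nat.add_le_add_right (hP τ) _))
    (fun y => by simpa only [eval_mul] using (hQ y).mul_const (ψ.eval y)) a b

lemma hasDerivAt_intervalIntegral_eval_mul_sq {R : ℝ → ℝ[X]} {R' : ℝ[X]}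
    (hP : ∀ τ, (P τ).natDegree ≤ m) (hR : ∀ τ, (R τ).natDegree ≤ m)
    (hQ : ∀ y, HasDerivAt (fun τ => (P τ).eval y) (Q.eval y) s)
    (hR' : ∀ y, HasDerivAt (fun τ => (R τ).eval y) (R'.eval y) s) (a b : ℝ) :
    HasDerivAt (fun τ => ∫ y in a..b, (P τ).eval y * (R τ).eval y ^ 2)
      (2 * ((∫ y in a..b, (R s).eval y ^ 2 / 2 * Q.eval y)
        + ∫ y in a..b, (P s).eval y * (R s).eval y * R'.eval y)) s := by
  have hdeg : ∀ τ, (P τ * R τ ^ 2).natDegree ≤ m + 2 * m := fun τ =>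
    natDegree_mul_le.trans (Nat.add_le_add (hP τ) (natDegree_pow_le_of_le 2 (hR τ)))
  have h := hasDerivAt_intervalIntegral_eval hdeg
    (Q := Q * R s ^ 2 + P s * (2 * R s * R')) (fun y => by
      simp only [eval_mul, eval_pow, eval_add, eval_ofNat]
      exact ((hQ y).fun_mul ((hR' y).fun_pow 2)).congr_deriv (by ring)) a b
  simp only [eval_mul, eval_pow, eval_add, eval_ofNat] at h
  convert h using 1
  rw [← intervalIntegral.integral_add (by apply Continuous.intervalIntegrable; fun_prop)
      (by apply Continuous.intervalIntegrable; fun_prop),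
    ← intervalIntegral.integral_const_mul]
  exact intervalIntegral.integral_congr fun y _ => by ring

end PolynomialFamilies

section PeriodicMesh

variable {N : ℕ} {grid : Fin (N + 2) → ℝ}

lemma eval_lep_eq_trP_sub_one (f : Fin (N + 1) → ℝ[X]) (j : Fin (N + 1)) :
    (f j).eval (lep grid j) = trP grid f (j - 1) := by
  rw [trP, sub_add_cancel]

lemma brk_self (hat : Fin (N + 1) → ℝ) (f : Fin (N + 1) → ℝ[X]) (j : Fin (N + 1)) :
    brk grid hat (f j) j = hat j * trM grid f j - hat (j - 1) * trP grid f (j - 1) := by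
  rw [brk, eval_lep_eq_trP_sub_one, trM]

lemma cellInt_eval_mul_derivative_self (f : Fin (N + 1) → ℝ[X]) (j : Fin (N + 1)) :
    cellInt grid j (fun y => (f j).eval y * (f j).derivative.eval y)
      = (trM grid f j ^ 2 - trP grid f (j - 1) ^ 2) / 2 := by
  rw [cellInt, intervalIntegral.integral_eq_sub_of_hasDerivAt
      (f := fun y => (f j).eval y ^ 2 / 2)
      (fun y _ => ((((f j).hasDerivAt y).fun_pow 2).div_const 2).congr_deriv (by ring))
      (((f j).continuous.fun_mul (f j).derivative.continuous).intervalIntegrable _ _),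
    eval_lep_eq_trP_sub_one, trM]
  ring

/-- Discrete integration by parts on the periodic mesh: the cell terms telescope into one
contribution per interface. -/
lemma sum_brk_sub_cellInt_eval_mul_derivative (hat : Fin (N + 1) → ℝ) (f : Fin (N + 1) → ℝ[X]) :
    ∑ j, (brk grid hat (f j) j - cellInt grid j (fun y => (f j).eval y * (f j).derivative.eval y))
      = ∑ j, jmp grid f j * (avg grid f j - hat j) := by
  have hshift : ∑ j, (hat (j - 1) * trP grid f (j - 1) - trP grid f (j - 1) ^ 2 / 2)
      = ∑ j, (hat j * trP grid f j - trP grid f j ^ 2 / 2) :=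
    (Equiv.subRight 1).sum_comp fun i => hat i * trP grid f i - trP grid f i ^ 2 / 2
  calc _ = ∑ j, (hat j * trM grid f j - trM grid f j ^ 2 / 2)
        - ∑ j, (hat (j - 1) * trP grid f (j - 1) - trP grid f (j - 1) ^ 2 / 2) := by
        rw [← sum_sub_distrib]
        refine sum_congr rfl fun j _ => ?_
        rw [brk_self, cellInt_eval_mul_derivative_self]
        ring
    _ = _ := by
        rw [hshift, ← sum_sub_distrib]
        refine sum_congr rfl fun j _ => ?_
        rw [jmp, avg]
        ring

lemma sum_brk_sub_cellInt_eq_mul_sum_jmp_sq {hat : Fin (N + 1) → ℝ} {f : Fin (N + 1) → ℝ[X]}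
    {c : ℝ} (hhat : ∀ i, hat i = avg grid f i - c * jmp grid f i) :
    ∑ j, (brk grid hat (f j) j - cellInt grid j (fun y => (f j).eval y * (f j).derivative.eval y))
      = c * ∑ j, jmp grid f j ^ 2 := by
  rw [sum_brk_sub_cellInt_eval_mul_derivative, mul_sum]
  exact sum_congr rfl fun j _ => by rw [hhat]; ring

variable {f : ℝ → Fin (N + 1) → ℝ[X]} {f' : Fin (N + 1) → ℝ[X]} {s : ℝ}

lemma hasDerivAt_avg (hf : ∀ j y, HasDerivAt (fun τ => (f τ j).eval y) ((f' j).eval y) s)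
    (i : Fin (N + 1)) :
    HasDerivAt (fun τ => avg grid (f τ) i) (avg grid f' i) s :=
  ((hf _ _).add (hf _ _)).div_const 2

lemma hasDerivAt_jmp (hf : ∀ j y, HasDerivAt (fun τ => (f τ j).eval y) ((f' j).eval y) s)
    (i : Fin (N + 1)) :
    HasDerivAt (fun τ => jmp grid (f τ) i) (jmp grid f' i) s :=
  (hf _ _).sub (hf _ _)

lemma hasDerivAt_brk {hat : ℝ → Fin (N + 1) → ℝ} {hat' : Fin (N + 1) → ℝ}
    (h : ∀ i, HasDerivAt (fun τ => hat τ i) (hat' i) s) (φ : ℝ[X]) (j : Fin (N + 1)) :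
    HasDerivAt (fun τ => brk grid (hat τ) φ j) (brk grid hat' φ j) s :=
  ((h j).mul_const _).sub ((h (j - 1)).mul_const _)

lemma cellInt_eq_brk_sub_cellInt_of_hasDerivAt {k : ℕ} {w : ℝ → Fin (N + 1) → ℝ[X]}
    {w' : Fin (N + 1) → ℝ[X]} {c : ℝ} {j : Fin (N + 1)} {ψ : ℝ[X]}
    (hw : ∀ τ, (w τ j).natDegree ≤ k) (hf : ∀ τ, (f τ j).natDegree ≤ k)
    (hw' : ∀ y, HasDerivAt (fun τ => (w τ j).eval y) ((w' j).eval y) s)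
    (hf' : ∀ j y, HasDerivAt (fun τ => (f τ j).eval y) ((f' j).eval y) s)
    (heq : ∀ τ, cellInt grid j (fun y => (w τ j).eval y * ψ.eval y)
      = brk grid (fun i => avg grid (f τ) i + c * jmp grid (f τ) i) ψ j
        - cellInt grid j (fun y => (f τ j).eval y * ψ.derivative.eval y)) :
    cellInt grid j (fun y => (w' j).eval y * ψ.eval y)
      = brk grid (fun i => avg grid f' i + c * jmp grid f' i) ψ j
        - cellInt grid j (fun y => (f' j).eval y * ψ.derivative.eval y) := by
  have hlhs : HasDerivAt (fun τ => cellInt grid j fun y => (w τ j).eval y * ψ.eval y) _ s :=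
    hasDerivAt_intervalIntegral_eval_mul hw hw' ψ _ _
  rw [funext heq] at hlhs
  exact hlhs.unique <| (hasDerivAt_brk (fun i => (hasDerivAt_avg hf' i).add
    ((hasDerivAt_jmp hf' i).const_mul c)) ψ j).sub
    (hasDerivAt_intervalIntegral_eval_mul hf (hf' j) ψ.derivative _ _)

end PeriodicMesh

theorem CD_DG_H0_dissipative_general
    (N k : ℕ) (grid : Fin (N + 2) → ℝ)
    (β μ : ℝ) (hβ : 0 ≤ β) (hμ : 0 ≤ μ)
    (ρ w u γ ρ' w' u' : ℝ → Fin (N + 1) → Polynomial ℝ)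
    (hdeg : ∀ s j, (ρ s j).natDegree ≤ k ∧ (w s j).natDegree ≤ k ∧
      (u s j).natDegree ≤ k ∧ (γ s j).natDegree ≤ k)
    (hρ' : ∀ (s : ℝ) (j : Fin (N + 1)) (y : ℝ),
      HasDerivAt (fun τ => (ρ τ j).eval y) ((ρ' s j).eval y) s)
    (hw' : ∀ (s : ℝ) (j : Fin (N + 1)) (y : ℝ),
      HasDerivAt (fun τ => (w τ j).eval y) ((w' s j).eval y) s)
    (hu' : ∀ (s : ℝ) (j : Fin (N + 1)) (y : ℝ),
      HasDerivAt (fun τ => (u τ j).eval y) ((u' s j).eval y) s)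
    (scheme1 : ∀ (s : ℝ) (j : Fin (N + 1)) (φ : Polynomial ℝ), φ.natDegree ≤ k →
      cellInt grid j (fun y => (ρ' s j).eval y * φ.eval y)
        + brk grid (fun i => avg grid (γ s) i - β * jmp grid (γ s) i) φ j
        - cellInt grid j (fun y => (γ s j).eval y * φ.derivative.eval y) = 0)
    (scheme2 : ∀ (s : ℝ) (j : Fin (N + 1)) (φ : Polynomial ℝ), φ.natDegree ≤ k →
      cellInt grid j (fun y => (w' s j).eval y * φ.eval y)
        = cellInt grid j (fun y => (ρ s j).eval y * (u s j).eval y * φ.eval y))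
    (scheme3 : ∀ (s : ℝ) (j : Fin (N + 1)) (ψ : Polynomial ℝ), ψ.natDegree ≤ k →
      cellInt grid j (fun y => (w s j).eval y * ψ.eval y)
        = brk grid (fun i => avg grid (u s) i + μ * jmp grid (u s) i) ψ j
          - cellInt grid j (fun y => (u s j).eval y * ψ.derivative.eval y))
    (scheme4 : ∀ (s : ℝ) (j : Fin (N + 1)) (η : Polynomial ℝ), η.natDegree ≤ k →
      cellInt grid j (fun y => (γ s j).eval y * η.eval y)
        = cellInt grid j (fun y => ((u s j).eval y) ^ 2 / 2 * η.eval y))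
    (s : ℝ) :
    ∃ d : ℝ, d ≤ 0 ∧
      HasDerivAt
        (fun τ => ∑ j, cellInt grid j (fun y => (ρ τ j).eval y * ((u τ j).eval y) ^ 2))
        d s := by
  have hρ (τ j) : (ρ τ j).natDegree ≤ k := (hdeg τ j).1
  have hw (τ j) : (w τ j).natDegree ≤ k := (hdeg τ j).2.1
  have hu (τ j) : (u τ j).natDegree ≤ k := (hdeg τ j).2.2.1
  have hγ (τ j) : (γ τ j).natDegree ≤ k := (hdeg τ j).2.2.2
  have hρ'k (j) : (ρ' s j).natDegree ≤ k := natDegree_le_of_hasDerivAt_eval (hρ · j) (hρ' s j)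
  have hu'k (j) : (u' s j).natDegree ≤ k := natDegree_le_of_hasDerivAt_eval (hu · j) (hu' s j)
  have hγ_diss : ∑ j, cellInt grid j (fun y => (γ s j).eval y * (ρ' s j).eval y)
      = -(β * ∑ j, jmp grid (γ s) j ^ 2) := by
    rw [← sum_brk_sub_cellInt_eq_mul_sum_jmp_sq fun _ => rfl, ← sum_neg_distrib]
    refine sum_congr rfl fun j _ => ?_
    have h := scheme1 s j (γ s j) (hγ s j)
    simp only [mul_comm (eval _ (ρ' s j))] at h
    linarith
  have hu'_diss : ∑ j, cellInt grid j (fun y => (w' s j).eval y * (u' s j).eval y)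
      = -μ * ∑ j, jmp grid (u' s) j ^ 2 := by
    rw [← sum_brk_sub_cellInt_eq_mul_sum_jmp_sq
      (hat := fun i => avg grid (u' s) i + μ * jmp grid (u' s) i) fun _ => by ring]
    exact sum_congr rfl fun j _ => cellInt_eq_brk_sub_cellInt_of_hasDerivAt
      (hw · j) (hu · j) (hw' s j) (hu' s) fun τ => scheme3 τ j _ (hu'k j)
  have hJγ : 0 ≤ ∑ j, jmp grid (γ s) j ^ 2 := sum_nonneg fun j _ => sq_nonneg _
  have hJu : 0 ≤ ∑ j, jmp grid (u' s) j ^ 2 := sum_nonneg fun j _ => sq_nonneg _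
  refine ⟨2 * (-(β * ∑ j, jmp grid (γ s) j ^ 2) + -μ * ∑ j, jmp grid (u' s) j ^ 2),
    by nlinarith [mul_nonneg hβ hJγ, mul_nonneg hμ hJu], ?_⟩
  rw [← hγ_diss, ← hu'_diss, ← sum_add_distrib, mul_sum]
  refine HasDerivAt.fun_sum fun j _ => (hasDerivAt_intervalIntegral_eval_mul_sq (hρ · j) (hu · j)
    (hρ' s j) (hu' s j) _ _).congr_deriv ?_
  rw [scheme4 s j _ (hρ'k j), scheme2 s j _ (hu'k j)]
  rfl

/-- **`H₀`-dissipation of the semi-discrete DG scheme for the coupled dispersionless system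
`ρ_s + (u²/2)_y = 0`, `u_{ys} = ρu`** (written as `ρ_s + γ_y = 0`, `ω_s = ρu`, `ω = u_y`,
`γ = u²/2`), with the numerical fluxes `γ̂ = {γ} - β⟦γ⟧`, `û = {u} + μ⟦u⟧`, `β, μ ≥ 0`,
and periodic boundary conditions. The discrete quantity `H₀(ρ_h, u_h) = ∫_I ρ_h u_h² dy`
satisfies `d/ds H₀ ≤ 0` for all `s`. -/
theorem CD_DG_H0_dissipative
    (N k : ℕ) (grid : Fin (N + 2) → ℝ) (hgrid : StrictMono grid)
    (β μ : ℝ) (hβ : 0 ≤ β) (hμ : 0 ≤ μ)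
    (ρ w u γ ρ' w' u' : ℝ → Fin (N + 1) → Polynomial ℝ)
    (hdeg : ∀ s j, (ρ s j).natDegree ≤ k ∧ (w s j).natDegree ≤ k ∧
      (u s j).natDegree ≤ k ∧ (γ s j).natDegree ≤ k)
    (hρ' : ∀ (s : ℝ) (j : Fin (N + 1)) (y : ℝ),
      HasDerivAt (fun τ => (ρ τ j).eval y) ((ρ' s j).eval y) s)
    (hw' : ∀ (s : ℝ) (j : Fin (N + 1)) (y : ℝ),
      HasDerivAt (fun τ => (w τ j).eval y) ((w' s j).eval y) s)
    (hu' : ∀ (s : ℝ) (j : Fin (N + 1)) (y : ℝ),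
      HasDerivAt (fun τ => (u τ j).eval y) ((u' s j).eval y) s)
    (scheme1 : ∀ (s : ℝ) (j : Fin (N + 1)) (φ : Polynomial ℝ), φ.natDegree ≤ k →
      cellInt grid j (fun y => (ρ' s j).eval y * φ.eval y)
        + brk grid (fun i => avg grid (γ s) i - β * jmp grid (γ s) i) φ j
        - cellInt grid j (fun y => (γ s j).eval y * φ.derivative.eval y) = 0)
    (scheme2 : ∀ (s : ℝ) (j : Fin (N + 1)) (φ : Polynomial ℝ), φ.natDegree ≤ k →
      cellInt grid j (fun y => (w' s j).eval y * φ.eval y)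
        = cellInt grid j (fun y => (ρ s j).eval y * (u s j).eval y * φ.eval y))
    (scheme3 : ∀ (s : ℝ) (j : Fin (N + 1)) (ψ : Polynomial ℝ), ψ.natDegree ≤ k →
      cellInt grid j (fun y => (w s j).eval y * ψ.eval y)
        = brk grid (fun i => avg grid (u s) i + μ * jmp grid (u s) i) ψ j
          - cellInt grid j (fun y => (u s j).eval y * ψ.derivative.eval y))
    (scheme4 : ∀ (s : ℝ) (j : Fin (N + 1)) (η : Polynomial ℝ), η.natDegree ≤ k →
      cellInt grid j (fun y => (γ s j).eval y * η.eval y)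
        = cellInt grid j (fun y => ((u s j).eval y) ^ 2 / 2 * η.eval y))
    (s : ℝ) :
    ∃ d : ℝ, d ≤ 0 ∧
      HasDerivAt
        (fun τ => ∑ j, cellInt grid j (fun y => (ρ τ j).eval y * ((u τ j).eval y) ^ 2))
        d s :=
  CD_DG_H0_dissipative_general N k grid β μ hβ hμ ρ w u γ ρ' w' u' hdeg hρ' hw' hu' scheme1 scheme2
    scheme3 scheme4 s
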